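/- Let X be a complete CAT(0) space, γ a ray in X with Busemann function b_γ, p ∈ X, and v ∈ Σ_p X. Then D_p b_γ(v) = −cos∠_p(γ̇_{pγ(∞)}(0), v), where γ_{pγ(∞)} is the unique ray from p asymptotic to γ. -/

import Mathlib

open Metric Filter Topology Set

noncomputable section

variable {X : Type*} [MetricSpace X]

/-- A unit-speed geodesic ray (parametrized on `[0, ∞)`). -/
def IsRay (γ : ℝ → X) : Prop :=
  ∀ ⦃s t : ℝ⦄, 0 ≤ s → 0 ≤ t → dist (γ s) (γ t) = |s - t|

/-- Two rays are asymptotic: their pointwise distance is uniformly bounded. -/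
def Asymp (γ σ : ℝ → X) : Prop :=
  ∃ C : ℝ, ∀ t : ℝ, 0 ≤ t → dist (γ t) (σ t) ≤ C

/-- A unit-speed minimizing geodesic from `x` to `y`, parametrized on `[0, dist x y]`. -/
def IsMinGeodesic (γ : ℝ → X) (x y : X) : Prop :=
  γ 0 = x ∧ γ (dist x y) = y ∧
    ∀ ⦃s t : ℝ⦄, s ∈ Set.Icc 0 (dist x y) → t ∈ Set.Icc 0 (dist x y) →
      dist (γ s) (γ t) = |s - t|

/-- Every pair of points is joined by a minimizing geodesic. -/
def GeodesicSpace (X : Type*) [MetricSpace X] : Prop :=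
  ∀ x y : X, ∃ γ : ℝ → X, IsMinGeodesic γ x y

/-- CAT(0): geodesic and satisfying the CN (Bruhat–Tits) inequality. -/
def IsCAT0 (X : Type*) [MetricSpace X] : Prop :=
  GeodesicSpace X ∧
    ∀ p q r m : X, dist q m = dist q r / 2 → dist m r = dist q r / 2 →
      dist p m ^ 2 ≤ (dist p q ^ 2 + dist p r ^ 2) / 2 - dist q r ^ 2 / 4

/-- A function convex along every minimizing geodesic. -/
def ConvexFun (F : X → ℝ) : Prop :=
  ∀ (x y : X) (γ : ℝ → X), IsMinGeodesic γ x y →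
    ConvexOn ℝ (Set.Icc 0 (dist x y)) (F ∘ γ)

/-- Euclidean comparison angle at `p` of the points `x`, `y`. -/
def compAngle (p x y : X) : ℝ :=
  Real.arccos ((dist p x ^ 2 + dist p y ^ 2 - dist x y ^ 2) / (2 * dist p x * dist p y))

/-- The (upper) angle at `p` between two curves emanating from `p`. -/
def angleAt (p : X) (γ σ : ℝ → X) : ℝ :=
  sInf {θ : ℝ | ∃ δ : ℝ, 0 < δ ∧
    θ = sSup {θ' : ℝ | ∃ s t : ℝ, s ∈ Set.Ioc 0 δ ∧ t ∈ Set.Ioc 0 δ ∧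
      θ' = compAngle p (γ s) (σ t)}}

/-- A unit-speed geodesic of length `ℓ` emanating from `p` (a direction at `p`). -/
def UnitGeodFrom (p : X) (γ : ℝ → X) (ℓ : ℝ) : Prop :=
  0 < ℓ ∧ γ 0 = p ∧
    ∀ ⦃s t : ℝ⦄, s ∈ Set.Icc 0 ℓ → t ∈ Set.Icc 0 ℓ → dist (γ s) (γ t) = |s - t|

/-- Intrinsic (angular) distance on the unit sphere of `ℝ³`. -/
def sdist (x y : EuclideanSpace ℝ (Fin 3)) : ℝ := Real.arccos (inner ℝ x y)

/-- CAT(1): points at distance < π are joined by geodesics, and geodesic triangles of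
perimeter < 2π satisfy comparison with triangles in the unit 2-sphere. -/
def IsCAT1 (Y : Type*) [MetricSpace Y] : Prop :=
  (∀ x y : Y, dist x y < Real.pi → ∃ γ : ℝ → Y, IsMinGeodesic γ x y) ∧
    ∀ (p q r : Y) (γ : ℝ → Y), IsMinGeodesic γ q r →
      dist p q + dist q r + dist r p < 2 * Real.pi →
      ∃ p' q' r' : EuclideanSpace ℝ (Fin 3), ‖p'‖ = 1 ∧ ‖q'‖ = 1 ∧ ‖r'‖ = 1 ∧
        sdist p' q' = dist p q ∧ sdist q' r' = dist q r ∧ sdist r' p' = dist r p ∧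
        ∀ t ∈ Set.Icc (0:ℝ) (dist q r), ∀ x' : EuclideanSpace ℝ (Fin 3), ‖x'‖ = 1 →
          sdist q' x' = t → sdist x' r' = dist q r - t → dist p (γ t) ≤ sdist p' x'

/-- Covering dimension ≤ n: every open cover has an open refinement of order ≤ n+1. -/
def CovDimLE (Y : Type*) [TopologicalSpace Y] (n : ℕ) : Prop :=
  ∀ U : Set (Set Y), (∀ u ∈ U, IsOpen u) → ⋃₀ U = Set.univ →
    ∃ V : Set (Set Y), (∀ v ∈ V, IsOpen v) ∧ ⋃₀ V = Set.univ ∧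
      (∀ v ∈ V, ∃ u ∈ U, v ⊆ u) ∧
      ∀ x : Y, {v ∈ V | x ∈ v}.Finite ∧ {v ∈ V | x ∈ v}.ncard ≤ n + 1

/-- Directional derivative of `F` at `p` along the geodesic `γ` (of length `ℓ`) from `p`;
for a convex `F` the difference quotients are monotone, so the limit is the infimum. -/
def dirDeriv (F : X → ℝ) (p : X) (γ : ℝ → X) (ℓ : ℝ) : ℝ :=
  sInf {r : ℝ | ∃ s ∈ Set.Ioc 0 ℓ, r = (F (γ s) - F p) / s}

/-- Busemann function of the ray `γ`; `t ↦ dist p (γ t) - t` is non-increasing, so the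
limit as `t → ∞` is the infimum. -/
def busemann (γ : ℝ → X) (p : X) : ℝ :=
  sInf {r : ℝ | ∃ t : ℝ, 0 ≤ t ∧ r = dist p (γ t) - t}

/-- Compactness of the space of directions `Σ_p X` (sequential total boundedness of
geodesic directions at `p` in the angle metric). -/
def DirCompact (p : X) : Prop :=
  ∀ (γ : ℕ → ℝ → X) (ℓ : ℕ → ℝ), (∀ n, UnitGeodFrom p (γ n) (ℓ n)) →
    ∃ φ : ℕ → ℕ, StrictMono φ ∧
      ∀ ε : ℝ, 0 < ε → ∃ N : ℕ, ∀ m ≥ N, ∀ n ≥ N,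
        angleAt p (γ (φ m)) (γ (φ n)) < ε

/-- The angle metric between ideal points represented by the rays `γ`, `σ`:
the supremum over basepoints `p` of the angle at `p` between the representatives from `p`. -/
def idealAngle (γ σ : ℝ → X) : ℝ :=
  sSup {θ : ℝ | ∃ (p : X) (γ' σ' : ℝ → X), IsRay γ' ∧ IsRay σ' ∧ γ' 0 = p ∧ σ' 0 = p ∧
    Asymp γ' γ ∧ Asymp σ' σ ∧ θ = angleAt p γ' σ'}

/-- The radius of a subset `A` of a metric space. -/
def setRadius {B : Type*} [MetricSpace B] (A : Set B) : ℝ :=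
  ⨅ x : A, ⨆ y : A, dist (x : B) (y : B)

/-- The set of centers of `A` (points of `A` realizing the radius). -/
def centersIn {B : Type*} [MetricSpace B] (A : Set B) : Set B :=
  {x | x ∈ A ∧ (⨆ y : A, dist x (y : B)) = setRadius A}

/-- The fixed point set of an isometry `f` in the ideal boundary `B` (with class map `cls`). -/
def FixedAtInfinity {X B : Type*} [MetricSpace X] (f : X → X) (cls : (ℝ → X) → B) : Set B :=
  {b | ∃ γ : ℝ → X, IsRay γ ∧ cls γ = b ∧ Asymp (f ∘ γ) γ}

end

/-!
Write `b = busemann γ` and `α = angleAt p σ v`. Along the asymptotic ray `σ`, `t ↦ b (σ t) + t` is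
midpoint convex (CN inequality) and bounded above, hence `b (σ u) ≤ b p - u`.

Upper bound: `b` is 1-Lipschitz, so `b (v s) ≤ b p - u + dist (v s) (σ u)`, and the law of cosines
with a comparison angle within `ε` of `α` (for `s, u` small) gives
`dist (v s) (σ u) ≤ u - s cos α + s (ε + s / u)`.

Lower bound: `b (v s) - b p = lim (dist (v s) (γ T) - dist p (γ T))`, and by the law of cosines
each term is at least `-s cos ∠̃_p(v s, γ T)`. In CAT(0) comparison angles are monotone along
geodesics from `p`, so `∠̃_p(v s, γ T)` dominates the comparison angle with the point at distance
`s` on `[p, γ T]`; these points converge to `σ s` (CN once more), and `∠̃_p(v s, σ s) ≥ α`.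
-/

def MidpointConvexOn (s : Set ℝ) (f : ℝ → ℝ) : Prop :=
  ∀ ⦃x⦄, x ∈ s → ∀ ⦃y⦄, y ∈ s → f ((x + y) / 2) ≤ (f x + f y) / 2

namespace MidpointConvexOn

variable {f : ℝ → ℝ}

lemma nonpos_dyadic {r : ℝ} (hr : 0 ≤ r) (hf : MidpointConvexOn (Icc 0 r) f)
    (h0 : f 0 ≤ 0) (hr0 : f r ≤ 0) (n : ℕ) : ∀ k : ℕ, k ≤ 2 ^ n → f (k * r / 2 ^ n) ≤ 0 := by
  induction n with
  | zero =>
    intro k hk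
    interval_cases k <;> simpa
  | succ n ih =>
    have hmem : ∀ m : ℕ, m ≤ 2 ^ n → (m * r / 2 ^ n : ℝ) ∈ Icc 0 r := fun m hm =>
      ⟨by positivity, div_le_of_le_mul₀ (by positivity) hr <| by
        rw [mul_comm r]; exact mul_le_mul_of_nonneg_right (by exact_mod_cast hm) hr⟩
    intro k hk
    obtain ⟨j, rfl | rfl⟩ := Nat.even_or_odd' k
    · have hj : (↑(2 * j) * r / 2 ^ (n + 1) : ℝ) = j * r / 2 ^ n := by push_cast; ring
      rw [hj]
      exact ih j (by omega)
    · have hj : (↑(2 * j + 1) * r / 2 ^ (n + 1) : ℝ)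
          = (j * r / 2 ^ n + ↑(j + 1) * r / 2 ^ n) / 2 := by
        push_cast; ring
      rw [hj]
      linarith [hf (hmem j (by omega)) (hmem (j + 1) (by omega)), ih j (by omega),
        ih (j + 1) (by omega)]

/-- The Lipschitz bound lets the dyadic points, where `nonpos_dyadic` applies, control every
point. -/
lemma nonpos_of_lipschitz {r K : ℝ} (hr : 0 < r) (hK : 0 ≤ K) (hf : MidpointConvexOn (Icc 0 r) f)
    (hlip : ∀ x ∈ Icc 0 r, ∀ y ∈ Icc 0 r, |f x - f y| ≤ K * |x - y|)
    (h0 : f 0 ≤ 0) (hr0 : f r ≤ 0) {t : ℝ} (ht : t ∈ Icc 0 r) : f t ≤ 0 := by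
  refine le_of_forall_pos_le_add fun ε hε => ?_
  obtain ⟨n, hn⟩ := pow_unbounded_of_one_lt (K * r / ε) (one_lt_two (α := ℝ))
  have h2n : (0 : ℝ) < 2 ^ n := by positivity
  set k : ℕ := ⌊t * 2 ^ n / r⌋₊
  have hk_le : (k : ℝ) ≤ t * 2 ^ n / r := Nat.floor_le (div_nonneg (mul_nonneg ht.1 h2n.le) hr.le)
  have hk_gt : t * 2 ^ n / r < k + 1 := Nat.lt_floor_add_one _
  rw [le_div_iff₀ hr] at hk_le
  rw [div_lt_iff₀ hr] at hk_gt
  have hd_le : (k * r / 2 ^ n : ℝ) ≤ t := by rw [div_le_iff₀ h2n]; linarith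
  have hd_ge : t - r / 2 ^ n ≤ k * r / 2 ^ n := by
    rw [sub_le_iff_le_add, ← add_div, le_div_iff₀ h2n]; linarith
  have hk : k ≤ 2 ^ n := by
    have : (k : ℝ) ≤ 2 ^ n := by nlinarith [ht.2]
    exact_mod_cast this
  have hdyadic := hf.nonpos_dyadic hr.le h0 hr0 n k hk
  have hlipt := (abs_le.1 (hlip t ht _ ⟨by positivity, hd_le.trans ht.2⟩)).2
  rw [abs_of_nonneg (sub_nonneg.2 hd_le)] at hlipt
  have hsmall : K * (r / 2 ^ n) ≤ ε := by
    rw [div_lt_iff₀ hε] at hn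
    rw [← mul_div_assoc, div_le_iff₀ h2n]; linarith
  nlinarith

lemma slope_le_of_lipschitz {L K : ℝ} (hK : 0 ≤ K) (hf : MidpointConvexOn (Icc 0 L) f)
    (hlip : ∀ x ∈ Icc 0 L, ∀ y ∈ Icc 0 L, |f x - f y| ≤ K * |x - y|)
    {u U : ℝ} (hu : 0 < u) (huU : u ≤ U) (hUL : U ≤ L) :
    (f u - f 0) / u ≤ (f U - f 0) / U := by
  have hU : 0 < U := hu.trans_le huU
  have hsub : Icc 0 U ⊆ Icc 0 L := Icc_subset_Icc_right hUL
  set m := (f U - f 0) / U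
  have hchord : f u - f 0 - u * m ≤ 0 := by
    refine nonpos_of_lipschitz (f := fun t => f t - f 0 - t * m) (K := K + |m|) hU
      (by positivity) (fun x hx y hy => ?_) (fun x hx y hy => ?_) (by simp) ?_ ⟨hu.le, huU⟩
    · have := hf (hsub hx) (hsub hy)
      linarith
    · calc |f x - f 0 - x * m - (f y - f 0 - y * m)| = |(f x - f y) - m * (x - y)| := by ring_nf
        _ ≤ |f x - f y| + |m * (x - y)| := abs_sub _ _
        _ ≤ (K + |m|) * |x - y| := by
          rw [abs_mul, add_mul]; gcongr; exact hlip x (hsub hx) y (hsub hy)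
    · simp [m, mul_div_cancel₀ _ hU.ne']
  rw [div_le_iff₀ hu]
  linarith

/-- Midpoint convexity at `0` and `2 x` gives `f (2 x) - f 0 ≥ 2 (f x - f 0)`, so an excess over
`f 0` would grow geometrically. -/
lemma le_of_bddAbove {C : ℝ} (hf : MidpointConvexOn (Ici 0) f) (hC : ∀ x ∈ Ici 0, f x ≤ C)
    {u : ℝ} (hu : 0 ≤ u) : f u ≤ f 0 := by
  have hdouble : ∀ n : ℕ, f 0 + 2 ^ n * (f u - f 0) ≤ f (2 ^ n * u) := by
    intro n
    induction n with
    | zero => simp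
    | succ n ih =>
      have h := hf (x := 0) (mem_Ici.2 le_rfl) (y := 2 ^ (n + 1) * u) (mem_Ici.2 (by positivity))
      rw [show (0 + 2 ^ (n + 1) * u) / 2 = 2 ^ n * u by ring] at h
      rw [pow_succ] at h ⊢
      linarith
  by_contra! h
  obtain ⟨n, hn⟩ := pow_unbounded_of_one_lt ((C - f 0) / (f u - f 0)) (one_lt_two (α := ℝ))
  rw [div_lt_iff₀ (by linarith)] at hn
  linarith [hdouble n, hC (2 ^ n * u) (mem_Ici.2 (by positivity))]

end MidpointConvexOn

section Geodesic

variable {X : Type*} [MetricSpace X]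

def IsUnitSpeedOn (c : ℝ → X) (S : Set ℝ) : Prop :=
  ∀ ⦃s t : ℝ⦄, s ∈ S → t ∈ S → dist (c s) (c t) = |s - t|

lemma IsUnitSpeedOn.dist_zero {c : ℝ → X} {S : Set ℝ} (hc : IsUnitSpeedOn c S) (h0 : (0 : ℝ) ∈ S)
    {s : ℝ} (hs : s ∈ S) (hs0 : 0 ≤ s) : dist (c 0) (c s) = s := by
  rw [hc h0 hs, zero_sub, abs_neg, abs_of_nonneg hs0]

lemma IsUnitSpeedOn.dist_midpoint {c : ℝ → X} {S : Set ℝ} (hc : IsUnitSpeedOn c S) {u₁ u₂ : ℝ}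
    (h₁ : u₁ ∈ S) (h₂ : u₂ ∈ S) (hm : (u₁ + u₂) / 2 ∈ S) :
    dist (c u₁) (c ((u₁ + u₂) / 2)) = dist (c u₁) (c u₂) / 2 ∧
      dist (c ((u₁ + u₂) / 2)) (c u₂) = dist (c u₁) (c u₂) / 2 := by
  rw [hc h₁ hm, hc hm h₂, hc h₁ h₂, show u₁ - (u₁ + u₂) / 2 = (u₁ - u₂) / 2 by ring,
    show (u₁ + u₂) / 2 - u₂ = (u₁ - u₂) / 2 by ring, abs_div, abs_two]
  exact ⟨rfl, rfl⟩

lemma IsUnitSpeedOn.mono {c : ℝ → X} {S T : Set ℝ} (hc : IsUnitSpeedOn c S) (hTS : T ⊆ S) :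
    IsUnitSpeedOn c T :=
  fun _ _ hs ht => hc (hTS hs) (hTS ht)

lemma IsRay.isUnitSpeedOn {γ : ℝ → X} (hγ : IsRay γ) : IsUnitSpeedOn γ (Ici 0) :=
  fun _ _ hs ht => hγ hs ht

lemma IsMinGeodesic.dist_left {c : ℝ → X} {x y : X} (hc : IsMinGeodesic c x y) {t : ℝ}
    (ht : t ∈ Icc 0 (dist x y)) : dist x (c t) = t := by
  rw [← hc.1]
  exact IsUnitSpeedOn.dist_zero hc.2.2 (left_mem_Icc.2 dist_nonneg) ht ht.1

lemma IsMinGeodesic.dist_right {c : ℝ → X} {x y : X} (hc : IsMinGeodesic c x y) {t : ℝ}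
    (ht : t ∈ Icc 0 (dist x y)) : dist (c t) y = dist x y - t := by
  conv_lhs => rw [← hc.2.1]
  rw [hc.2.2 ht (right_mem_Icc.2 dist_nonneg), abs_of_nonpos (sub_nonpos.2 ht.2), neg_sub]

lemma GeodesicSpace.exists_midpoint (hX : GeodesicSpace X) (x y : X) :
    ∃ m, dist x m = dist x y / 2 ∧ dist m y = dist x y / 2 := by
  obtain ⟨c, hc0, hcy, hc⟩ := hX x y
  have hd := dist_nonneg (x := x) (y := y)
  have := IsUnitSpeedOn.dist_midpoint hc (left_mem_Icc.2 hd) (right_mem_Icc.2 hd)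
    ⟨by positivity, by linarith⟩
  rw [hc0, hcy] at this
  exact ⟨_, this⟩

lemma IsCAT0.dist_midpoint_le (hX : IsCAT0 X) {x y m : X} (q : X)
    (hxm : dist x m = dist x y / 2) (hmy : dist m y = dist x y / 2) :
    dist q m ≤ (dist q x + dist q y) / 2 := by
  have hcn := hX.2 q x y m hxm hmy
  have hsq : (dist q x - dist q y) ^ 2 ≤ dist x y ^ 2 := by
    rw [← sq_abs]
    gcongr
    simpa only [dist_comm q] using abs_dist_sub_le x y q
  nlinarith [dist_nonneg (x := q) (y := m), dist_nonneg (x := q) (y := x),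
    dist_nonneg (x := q) (y := y)]

lemma IsCAT0.midpointConvexOn_dist_sq_sub_sq (hX : IsCAT0 X) {c : ℝ → X} {L : ℝ}
    (hc : IsUnitSpeedOn c (Icc 0 L)) (q : X) :
    MidpointConvexOn (Icc 0 L) fun t => dist q (c t) ^ 2 - t ^ 2 := by
  intro u₁ h₁ u₂ h₂
  obtain ⟨e₁, e₂⟩ := hc.dist_midpoint h₁ h₂ ⟨by linarith [h₁.1, h₂.1], by linarith [h₁.2, h₂.2]⟩
  have hcn := hX.2 q _ _ _ e₁ e₂
  rw [hc h₁ h₂, sq_abs] at hcn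
  linarith

lemma IsUnitSpeedOn.abs_dist_sq_sub_sq_sub_le {c : ℝ → X} {L : ℝ} (hc : IsUnitSpeedOn c (Icc 0 L))
    (q : X) {x y : ℝ} (hx : x ∈ Icc 0 L) (hy : y ∈ Icc 0 L) :
    |(dist q (c x) ^ 2 - x ^ 2) - (dist q (c y) ^ 2 - y ^ 2)|
      ≤ (2 * dist q (c 0) + 4 * L) * |x - y| := by
  have h0 : (0 : ℝ) ∈ Icc 0 L := ⟨le_rfl, hx.1.trans hx.2⟩
  have hdx : dist q (c x) ≤ dist q (c 0) + L := by
    linarith [dist_triangle q (c 0) (c x), hc.dist_zero h0 hx hx.1, hx.2]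
  have hdy : dist q (c y) ≤ dist q (c 0) + L := by
    linarith [dist_triangle q (c 0) (c y), hc.dist_zero h0 hy hy.1, hy.2]
  have hlip : |dist q (c x) - dist q (c y)| ≤ |x - y| := by
    simpa only [dist_comm q, hc hx hy] using abs_dist_sub_le (c x) (c y) q
  have hxy : |x + y| ≤ 2 * L := by
    rw [abs_of_nonneg (by linarith [hx.1, hy.1])]; linarith [hx.2, hy.2]
  calc |(dist q (c x) ^ 2 - x ^ 2) - (dist q (c y) ^ 2 - y ^ 2)|
      = |(dist q (c x) - dist q (c y)) * (dist q (c x) + dist q (c y)) - (x - y) * (x + y)| := by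
        ring_nf
    _ ≤ |dist q (c x) - dist q (c y)| * |dist q (c x) + dist q (c y)| + |x - y| * |x + y| := by
        rw [← abs_mul, ← abs_mul]; exact abs_sub _ _
    _ ≤ |x - y| * (2 * dist q (c 0) + 2 * L) + |x - y| * (2 * L) := by
        rw [abs_of_nonneg (by positivity : 0 ≤ dist q (c x) + dist q (c y))]
        exact add_le_add (mul_le_mul hlip (by linarith) (by positivity) (abs_nonneg _))
          (mul_le_mul_of_nonneg_left hxy (abs_nonneg _))
    _ = (2 * dist q (c 0) + 4 * L) * |x - y| := by ring

lemma IsCAT0.slope_dist_sq_sub_sq_le (hX : IsCAT0 X) {c : ℝ → X} {L : ℝ}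
    (hc : IsUnitSpeedOn c (Icc 0 L)) (q : X) {u U : ℝ} (hu : 0 < u) (huU : u ≤ U) (hUL : U ≤ L) :
    (dist q (c u) ^ 2 - u ^ 2 - dist q (c 0) ^ 2) / u
      ≤ (dist q (c U) ^ 2 - U ^ 2 - dist q (c 0) ^ 2) / U := by
  have hL : 0 ≤ L := hu.le.trans (huU.trans hUL)
  simpa using (hX.midpointConvexOn_dist_sq_sub_sq hc q).slope_le_of_lipschitz (by positivity)
    (fun x hx y hy => hc.abs_dist_sq_sub_sq_sub_le q hx hy) hu huU hUL

end Geodesic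

section CompAngle

variable {X : Type*} [MetricSpace X]

lemma cos_compAngle {p x y : X} (hx : 0 < dist p x) (hy : 0 < dist p y) :
    Real.cos (compAngle p x y)
      = (dist p x ^ 2 + dist p y ^ 2 - dist x y ^ 2) / (2 * dist p x * dist p y) := by
  have hle : dist x y ≤ dist p x + dist p y := by
    simpa only [dist_comm x p] using dist_triangle x p y
  have hge : (dist p x - dist p y) ^ 2 ≤ dist x y ^ 2 := by
    rw [← sq_abs]
    gcongr
    simpa only [dist_comm p] using abs_dist_sub_le x y p
  refine Real.cos_arccos ?_ ?_
  · rw [le_div_iff₀ (by positivity)]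
    nlinarith [dist_nonneg (x := x) (y := y)]
  · rw [div_le_one (by positivity)]
    nlinarith

lemma compAngle_nonneg (p x y : X) : 0 ≤ compAngle p x y := Real.arccos_nonneg _

lemma compAngle_le_pi (p x y : X) : compAngle p x y ≤ Real.pi := Real.arccos_le_pi _

lemma compAngle_comm (p x y : X) : compAngle p x y = compAngle p y x := by
  rw [compAngle, compAngle, dist_comm x y, add_comm (dist p x ^ 2), mul_right_comm]

lemma dist_sq_eq_compAngle {p x y : X} (hx : 0 < dist p x) (hy : 0 < dist p y) :
    dist x y ^ 2
      = dist p x ^ 2 + dist p y ^ 2 - 2 * dist p x * dist p y * Real.cos (compAngle p x y) := by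
  rw [cos_compAngle hx hy]
  field_simp
  ring

lemma sub_mul_cos_compAngle_le_dist {p x y : X} (hx : 0 < dist p x) (hy : 0 < dist p y) :
    dist p y - dist p x * Real.cos (compAngle p x y) ≤ dist x y := by
  have hsq : (dist p y - dist x y) ^ 2 ≤ dist p x ^ 2 := by
    rw [← sq_abs]
    gcongr
    exact abs_dist_sub_le p x y
  nlinarith [mul_pos hx hy, dist_sq_eq_compAngle hx hy, dist_nonneg (x := x) (y := y)]

lemma continuousAt_compAngle {p x y : X} (hx : 0 < dist p x) (hy : 0 < dist p y) :
    ContinuousAt (compAngle p x) y := by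
  refine Real.continuous_arccos.continuousAt.comp (ContinuousAt.div ?_ ?_ (by positivity))
  all_goals fun_prop

lemma IsCAT0.compAngle_mono_right (hX : IsCAT0 X) {p x : X} {c : ℝ → X} {L : ℝ}
    (hc : IsUnitSpeedOn c (Icc 0 L)) (hc0 : c 0 = p) (hx : 0 < dist p x)
    {u U : ℝ} (hu : 0 < u) (huU : u ≤ U) (hUL : U ≤ L) :
    compAngle p x (c u) ≤ compAngle p x (c U) := by
  have hU : 0 < U := hu.trans_le huU
  have h0 : (0 : ℝ) ∈ Icc 0 L := ⟨le_rfl, hU.le.trans hUL⟩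
  have hdu : dist p (c u) = u := hc0 ▸ hc.dist_zero h0 ⟨hu.le, huU.trans hUL⟩ hu.le
  have hdU : dist p (c U) = U := hc0 ▸ hc.dist_zero h0 ⟨hU.le, hUL⟩ hU.le
  have hslope := hX.slope_dist_sq_sub_sq_le hc x hu huU hUL
  rw [hc0, dist_comm x p, div_le_div_iff₀ hu hU] at hslope
  unfold compAngle
  rw [hdu, hdU]
  apply Real.arccos_le_arccos
  rw [div_le_div_iff₀ (by positivity) (by positivity)]
  nlinarith [mul_le_mul_of_nonneg_left hslope hx.le]

lemma IsCAT0.compAngle_mono (hX : IsCAT0 X) {p : X} {c c' : ℝ → X} {L L' : ℝ}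
    (hc : IsUnitSpeedOn c (Icc 0 L)) (hc0 : c 0 = p)
    (hc' : IsUnitSpeedOn c' (Icc 0 L')) (hc'0 : c' 0 = p)
    {u U u' U' : ℝ} (hu : 0 < u) (huU : u ≤ U) (hUL : U ≤ L)
    (hu' : 0 < u') (huU' : u' ≤ U') (hUL' : U' ≤ L') :
    compAngle p (c u) (c' u') ≤ compAngle p (c U) (c' U') := by
  have hdu : dist p (c u) = u :=
    hc0 ▸ hc.dist_zero ⟨le_rfl, hu.le.trans (huU.trans hUL)⟩ ⟨hu.le, huU.trans hUL⟩ hu.le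
  have hdU' : dist p (c' U') = U' := hc'0 ▸ hc'.dist_zero
    ⟨le_rfl, (hu'.le.trans huU').trans hUL'⟩ ⟨hu'.le.trans huU', hUL'⟩ (hu'.le.trans huU')
  calc compAngle p (c u) (c' u')
      ≤ compAngle p (c u) (c' U') :=
        hX.compAngle_mono_right hc' hc'0 (by rw [hdu]; exact hu) hu' huU' hUL'
    _ = compAngle p (c' U') (c u) := compAngle_comm _ _ _
    _ ≤ compAngle p (c' U') (c U) :=
        hX.compAngle_mono_right hc hc0 (by rw [hdU']; exact hu'.trans_le huU') hu huU hUL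
    _ = compAngle p (c U) (c' U') := compAngle_comm _ _ _

end CompAngle

section AngleAt

variable {X : Type*} [MetricSpace X]

lemma bddAbove_setOf_compAngle (p : X) (c c' : ℝ → X) (δ : ℝ) :
    BddAbove {θ | ∃ s t : ℝ, s ∈ Ioc 0 δ ∧ t ∈ Ioc 0 δ ∧ θ = compAngle p (c s) (c' t)} :=
  ⟨Real.pi, by rintro _ ⟨s, t, -, -, rfl⟩; exact compAngle_le_pi _ _ _⟩

lemma sSup_compAngle_nonneg (p : X) (c c' : ℝ → X) {δ : ℝ} (hδ : 0 < δ) :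
    0 ≤ sSup {θ | ∃ s t : ℝ, s ∈ Ioc 0 δ ∧ t ∈ Ioc 0 δ ∧ θ = compAngle p (c s) (c' t)} :=
  (compAngle_nonneg p (c δ) (c' δ)).trans
    (le_csSup (bddAbove_setOf_compAngle p c c' δ) ⟨δ, δ, ⟨hδ, le_rfl⟩, ⟨hδ, le_rfl⟩, rfl⟩)

lemma angleAt_nonneg (p : X) (c c' : ℝ → X) : 0 ≤ angleAt p c c' := by
  unfold angleAt
  refine le_csInf ⟨_, 1, one_pos, rfl⟩ ?_
  rintro _ ⟨δ, hδ, rfl⟩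
  exact sSup_compAngle_nonneg p c c' hδ

lemma exists_compAngle_lt_angleAt_add (p : X) (c c' : ℝ → X) {ε : ℝ} (hε : 0 < ε) :
    ∃ δ > 0, ∀ s ∈ Ioc 0 δ, ∀ t ∈ Ioc 0 δ, compAngle p (c s) (c' t) < angleAt p c c' + ε := by
  have hlt := lt_add_of_pos_right (angleAt p c c') hε
  unfold angleAt at hlt ⊢
  obtain ⟨_, ⟨δ, hδ, rfl⟩, hδlt⟩ := exists_lt_of_csInf_lt (by exact ⟨_, 1, one_pos, rfl⟩) hlt
  exact ⟨δ, hδ, fun s hs t ht =>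
    (le_csSup (bddAbove_setOf_compAngle p c c' δ) ⟨s, t, hs, ht, rfl⟩).trans_lt hδlt⟩

lemma IsCAT0.angleAt_le_compAngle (hX : IsCAT0 X) {p : X} {c c' : ℝ → X} {L L' : ℝ}
    (hc : IsUnitSpeedOn c (Icc 0 L)) (hc0 : c 0 = p)
    (hc' : IsUnitSpeedOn c' (Icc 0 L')) (hc'0 : c' 0 = p)
    {s t : ℝ} (hs : 0 < s) (hsL : s ≤ L) (ht : 0 < t) (htL : t ≤ L') :
    angleAt p c c' ≤ compAngle p (c s) (c' t) := by
  have hδ : 0 < min s t := lt_min hs ht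
  unfold angleAt
  refine le_trans (csInf_le ⟨0, ?_⟩ ⟨min s t, hδ, rfl⟩) ?_
  · rintro _ ⟨δ, hδ, rfl⟩
    exact sSup_compAngle_nonneg p c c' hδ
  · refine csSup_le ⟨_, _, _, ⟨hδ, le_rfl⟩, ⟨hδ, le_rfl⟩, rfl⟩ ?_
    rintro _ ⟨a, b, ha, hb, rfl⟩
    exact hX.compAngle_mono hc hc0 hc' hc'0 ha.1 (ha.2.trans (min_le_left _ _)) hsL
      hb.1 (hb.2.trans (min_le_right _ _)) htL

end AngleAt

section Busemann

variable {X : Type*} [MetricSpace X] {γ : ℝ → X}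

lemma IsRay.dist_sub_antitoneOn (hγ : IsRay γ) (x : X) :
    AntitoneOn (fun t => dist x (γ t) - t) (Ici 0) := by
  intro t ht T hT htT
  have := dist_triangle x (γ t) (γ T)
  rw [hγ ht hT, abs_of_nonpos (by linarith)] at this
  simp only
  linarith

lemma IsRay.neg_dist_le_dist_sub (hγ : IsRay γ) (x : X) {t : ℝ} (ht : 0 ≤ t) :
    -dist x (γ 0) ≤ dist x (γ t) - t := by
  have := dist_triangle (γ 0) x (γ t)
  rw [hγ le_rfl ht, zero_sub, abs_neg, abs_of_nonneg ht, dist_comm] at this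
  linarith

lemma busemann_le (hγ : IsRay γ) (x : X) {t : ℝ} (ht : 0 ≤ t) :
    busemann γ x ≤ dist x (γ t) - t :=
  csInf_le ⟨_, by rintro _ ⟨t, ht, rfl⟩; exact hγ.neg_dist_le_dist_sub x ht⟩ ⟨t, ht, rfl⟩

lemma tendsto_busemann (hγ : IsRay γ) (x : X) :
    Tendsto (fun t => dist x (γ t) - t) atTop (𝓝 (busemann γ x)) := by
  refine tendsto_order.2 ⟨fun a ha => ?_, fun a ha => ?_⟩
  · filter_upwards [eventually_ge_atTop 0] with t ht
    exact ha.trans_le (busemann_le hγ x ht)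
  · obtain ⟨_, ⟨t, ht, rfl⟩, hlt⟩ := exists_lt_of_csInf_lt (by exact ⟨_, 0, le_rfl, rfl⟩) ha
    filter_upwards [eventually_ge_atTop t] with T hT
    exact (hγ.dist_sub_antitoneOn x ht (mem_Ici.2 (ht.trans hT)) hT).trans_lt hlt

lemma IsRay.tendsto_dist_atTop (hγ : IsRay γ) (x : X) :
    Tendsto (fun t => dist x (γ t)) atTop atTop := by
  simpa using (tendsto_busemann hγ x).add_atTop tendsto_id

lemma busemann_le_add_dist (hγ : IsRay γ) (x y : X) :
    busemann γ x ≤ busemann γ y + dist x y := by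
  refine le_of_tendsto_of_tendsto' (tendsto_busemann hγ x)
    ((tendsto_busemann hγ y).add_const (dist x y)) fun t => ?_
  linarith [dist_triangle x y (γ t), dist_comm x y]

lemma IsCAT0.busemann_midpoint_le (hX : IsCAT0 X) (hγ : IsRay γ) {x y m : X}
    (hxm : dist x m = dist x y / 2) (hmy : dist m y = dist x y / 2) :
    busemann γ m ≤ (busemann γ x + busemann γ y) / 2 := by
  refine le_of_tendsto_of_tendsto' (tendsto_busemann hγ m)
    (((tendsto_busemann hγ x).add (tendsto_busemann hγ y)).div_const 2) fun t => ?_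
  have := hX.dist_midpoint_le (γ t) hxm hmy
  simp only [dist_comm (γ t)] at this
  linarith

lemma IsCAT0.busemann_le_sub_of_asymp (hX : IsCAT0 X) {ρ τ : ℝ → X} (hρ : IsRay ρ)
    (hτ : IsRay τ) (hρτ : Asymp ρ τ) {u : ℝ} (hu : 0 ≤ u) :
    busemann τ (ρ u) ≤ busemann τ (ρ 0) - u := by
  obtain ⟨C, hC⟩ := hρτ
  have hmid : MidpointConvexOn (Ici 0) fun t => busemann τ (ρ t) + t := by
    intro x hx y hy
    obtain ⟨e₁, e₂⟩ := hρ.isUnitSpeedOn.dist_midpoint hx hy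
      (mem_Ici.2 (by linarith [mem_Ici.1 hx, mem_Ici.1 hy]))
    have := hX.busemann_midpoint_le hτ e₁ e₂
    simp only
    linarith
  have := hmid.le_of_bddAbove (C := C) (fun t ht => by
    linarith [busemann_le hτ (ρ t) ht, hC t ht]) hu
  simp only [add_zero] at this
  linarith

end Busemann

lemma le_sub_div_of_sq_le_sq_sub {P x y : ℝ} (hx : 0 < x) (h : P ^ 2 ≤ x ^ 2 - y) :
    P ≤ x - y / (2 * x) := by
  have hyx : y / (2 * x) ≤ x / 2 := by
    rw [div_le_div_iff₀ (by positivity) two_pos]; nlinarith [sq_nonneg P]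
  refine le_of_abs_le (abs_le_of_sq_le_sq ?_ (by linarith))
  have : (x - y / (2 * x)) ^ 2 = x ^ 2 - y + (y / (2 * x)) ^ 2 := by field_simp; ring
  nlinarith [sq_nonneg (y / (2 * x))]

lemma le_sub_mul_add_sq_div {d s u c : ℝ} (hs : 0 ≤ s) (hu : 0 < u) (hc : c ≤ 1)
    (h : d ^ 2 ≤ s ^ 2 + u ^ 2 - 2 * s * u * c) : d ≤ u - s * c + s ^ 2 / u := by
  have hpos : 0 ≤ u - s * c + s ^ 2 / u := by
    have : u - s + s ^ 2 / u = ((u - s) ^ 2 + s * u) / u := by field_simp; ring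
    nlinarith [mul_le_mul_of_nonneg_left hc hs, div_nonneg (add_nonneg (sq_nonneg (u - s))
      (mul_nonneg hs hu.le)) hu.le]
  have hsq : (u - s * c + s ^ 2 / u) ^ 2
      = (s ^ 2 + u ^ 2 - 2 * s * u * c) + ((s * c - s ^ 2 / u) ^ 2 + s ^ 2) := by
    field_simp; ring
  nlinarith [sq_nonneg (s * c - s ^ 2 / u), sq_nonneg s]

section FirstVariation

variable {X : Type*} [MetricSpace X] {γ : ℝ → X}

/-- CN at the midpoint `m` of `[a, b]` shortens both `p m` and `m q` by about `dist a b ^ 2 / 8t`,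
while the triangle inequality through `m` allows a saving of at most `ε`. -/
lemma IsCAT0.dist_sq_le_of_almost_between (hX : IsCAT0 X) {p q a b : X} {t ε : ℝ} (ht : 0 < t)
    (htq : t < dist p q) (hpa : dist p a = t) (hpb : dist p b = t)
    (hbq : dist b q = dist p q - t) (haq : dist a q ≤ dist p q - t + ε) :
    dist a b ^ 2 ≤ 8 * t * ε := by
  obtain ⟨m, ham, hmb⟩ := hX.1.exists_midpoint a b
  have hε : 0 ≤ ε := by linarith [dist_triangle p a q]
  have hP := hX.2 p a b m ham hmb
  have hQ := hX.2 q a b m ham hmb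
  rw [hpa, hpb] at hP
  rw [dist_comm q a, dist_comm q b, hbq] at hQ
  have haq2 : dist a q ^ 2 ≤ (dist p q - t + ε) ^ 2 := pow_le_pow_left₀ dist_nonneg haq 2
  have hpm : dist p m ≤ t - dist a b ^ 2 / 4 / (2 * t) :=
    le_sub_div_of_sq_le_sq_sub ht (by linarith)
  have hmq : dist m q ≤ (dist p q - t + ε) - dist a b ^ 2 / 4 / (2 * (dist p q - t + ε)) :=
    le_sub_div_of_sq_le_sq_sub (by linarith) (by rw [dist_comm]; nlinarith)
  have hshort : dist a b ^ 2 / 4 / (2 * t) ≤ ε := by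
    have : 0 ≤ dist a b ^ 2 / 4 / (2 * (dist p q - t + ε)) := by
      have : 0 < dist p q - t + ε := by linarith
      positivity
    linarith [dist_triangle p m q]
  rw [div_div, div_le_iff₀ (by positivity)] at hshort
  linarith

lemma IsCAT0.tendsto_geodesic_of_busemann_le (hX : IsCAT0 X) (hγ : IsRay γ) {p a : X} {t : ℝ}
    (ht : 0 < t) (hpa : dist p a = t) (hba : busemann γ a ≤ busemann γ p - t)
    {ζ : ℝ → ℝ → X} (hζ : ∀ T, IsMinGeodesic (ζ T) p (γ T)) :
    Tendsto (fun T => ζ T t) atTop (𝓝 a) := by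
  have hexcess : Tendsto (fun T => dist a (γ T) + t - dist p (γ T)) atTop (𝓝 0) := by
    have h := ((tendsto_busemann hγ a).sub (tendsto_busemann hγ p)).add_const t
    have hlim : busemann γ a - busemann γ p + t = 0 :=
      le_antisymm (by linarith) (ge_of_tendsto' h fun T => by linarith [dist_triangle p a (γ T)])
    rw [hlim] at h
    exact h.congr fun T => by ring
  rw [tendsto_iff_dist_tendsto_zero]
  refine squeeze_zero' (Eventually.of_forall fun _ => dist_nonneg) ?_
    (by simpa using (hexcess.const_mul (8 * t)).sqrt)
  filter_upwards [(hγ.tendsto_dist_atTop p).eventually_gt_atTop t] with T hT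
  have hmem : t ∈ Icc 0 (dist p (γ T)) := ⟨ht.le, hT.le⟩
  rw [dist_comm]
  exact (le_abs_self _).trans (Real.abs_le_sqrt (hX.dist_sq_le_of_almost_between ht hT hpa
    ((hζ T).dist_left hmem) ((hζ T).dist_right hmem) (by linarith)))

lemma IsCAT0.busemann_sub_mul_cos_le (hX : IsCAT0 X) (hγ : IsRay γ) {p x a : X} {t : ℝ}
    (ht : 0 < t) (hpa : dist p a = t) (hba : busemann γ a ≤ busemann γ p - t)
    (hx : 0 < dist p x) :
    busemann γ p - dist p x * Real.cos (compAngle p x a) ≤ busemann γ x := by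
  choose ζ hζ using fun T => hX.1 p (γ T)
  have hcos : Tendsto (fun T => Real.cos (compAngle p x (ζ T t))) atTop
      (𝓝 (Real.cos (compAngle p x a))) :=
    (Real.continuous_cos.tendsto _).comp ((continuousAt_compAngle hx (hpa ▸ ht)).tendsto.comp
      (hX.tendsto_geodesic_of_busemann_le hγ ht hpa hba hζ))
  refine le_of_tendsto_of_tendsto ((tendsto_busemann hγ p).sub (hcos.const_mul (dist p x)))
    (tendsto_busemann hγ x) ?_
  filter_upwards [(hγ.tendsto_dist_atTop p).eventually_gt_atTop t] with T hT
  have hangle : compAngle p x (ζ T t) ≤ compAngle p x (γ T) := by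
    simpa only [(hζ T).2.1] using hX.compAngle_mono_right (hζ T).2.2 (hζ T).1 hx ht hT.le le_rfl
  have hcos_le := Real.cos_le_cos_of_nonneg_of_le_pi (compAngle_nonneg _ _ _)
    (compAngle_le_pi _ _ _) hangle
  linarith [sub_mul_cos_compAngle_le_dist hx (ht.trans hT),
    mul_le_mul_of_nonneg_left hcos_le hx.le]

lemma IsCAT0.busemann_le_sub_mul_cos_add (hX : IsCAT0 X) (hγ : IsRay γ) {p : X} {σ : ℝ → X}
    (hσ : IsRay σ) (hσ0 : σ 0 = p) (hσγ : Asymp σ γ) {x : X} {u : ℝ} (hu : 0 < u)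
    (hx : 0 < dist p x) :
    busemann γ x
      ≤ busemann γ p - dist p x * Real.cos (compAngle p (σ u) x) + dist p x ^ 2 / u := by
  have hpσ : dist p (σ u) = u :=
    hσ0 ▸ hσ.isUnitSpeedOn.dist_zero (mem_Ici.2 le_rfl) (mem_Ici.2 hu.le) hu.le
  have hlaw := dist_sq_eq_compAngle (hpσ ▸ hu) hx
  rw [hpσ] at hlaw
  have hdist := le_sub_mul_add_sq_div (d := dist (σ u) x) (dist_nonneg (x := p) (y := x)) hu
    (Real.cos_le_one (compAngle p (σ u) x)) (by linarith)
  have hcal := hX.busemann_le_sub_of_asymp hσ hγ hσγ hu.le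
  rw [hσ0] at hcal
  linarith [busemann_le_add_dist hγ x (σ u), dist_comm x (σ u)]

end FirstVariation

section Slope

variable {X : Type*} [MetricSpace X] {γ σ v : ℝ → X} {p : X} {ℓ : ℝ}

lemma IsCAT0.neg_cos_angleAt_le_busemann_slope (hX : IsCAT0 X) (hγ : IsRay γ) (hσ : IsRay σ)
    (hσ0 : σ 0 = p) (hσγ : Asymp σ γ) (hv : UnitGeodFrom p v ℓ) {s : ℝ} (hs : 0 < s)
    (hsℓ : s ≤ ℓ) :
    -Real.cos (angleAt p σ v) ≤ (busemann γ (v s) - busemann γ p) / s := by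
  obtain ⟨hℓ, hv0, hvu⟩ := hv
  have hpv : dist p (v s) = s :=
    hv0 ▸ IsUnitSpeedOn.dist_zero hvu ⟨le_rfl, hℓ.le⟩ ⟨hs.le, hsℓ⟩ hs.le
  have hpσ : dist p (σ s) = s :=
    hσ0 ▸ hσ.isUnitSpeedOn.dist_zero (mem_Ici.2 le_rfl) (mem_Ici.2 hs.le) hs.le
  have hcal := hX.busemann_le_sub_of_asymp hσ hγ hσγ hs.le
  rw [hσ0] at hcal
  have hlow := hX.busemann_sub_mul_cos_le hγ hs hpσ hcal (hpv ▸ hs)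
  have hangle : angleAt p σ v ≤ compAngle p (v s) (σ s) := by
    rw [compAngle_comm]
    exact hX.angleAt_le_compAngle (hσ.isUnitSpeedOn.mono Icc_subset_Ici_self) hσ0 hvu hv0
      hs le_rfl hs hsℓ
  have hcos := Real.cos_le_cos_of_nonneg_of_le_pi (angleAt_nonneg p σ v) (compAngle_le_pi _ _ _)
    hangle
  rw [hpv] at hlow
  rw [le_div_iff₀ hs]
  nlinarith

lemma IsCAT0.eventually_busemann_slope_lt (hX : IsCAT0 X) (hγ : IsRay γ) (hσ : IsRay σ)
    (hσ0 : σ 0 = p) (hσγ : Asymp σ γ) (hv : UnitGeodFrom p v ℓ) {a : ℝ}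
    (ha : -Real.cos (angleAt p σ v) < a) :
    ∀ᶠ s in 𝓝[>] 0, (busemann γ (v s) - busemann γ p) / s < a := by
  obtain ⟨hℓ, hv0, hvu⟩ := hv
  set ε := a + Real.cos (angleAt p σ v)
  have hε : 0 < ε := by linarith
  obtain ⟨δ, hδ, hθ⟩ := exists_compAngle_lt_angleAt_add p σ v (half_pos hε)
  set u := min δ ℓ
  have hu : 0 < u := lt_min hδ hℓ
  filter_upwards [Ioo_mem_nhdsGT (show 0 < min u (u * (ε / 2)) by positivity)] with s hs
  have hsu : s ≤ u := hs.2.le.trans (min_le_left _ _)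
  have hsε : s / u < ε / 2 := (div_lt_iff₀ hu).2 (by linarith [hs.2.trans_le (min_le_right _ _)])
  have hpv : dist p (v s) = s :=
    hv0 ▸ IsUnitSpeedOn.dist_zero hvu ⟨le_rfl, hℓ.le⟩ ⟨hs.1.le, hsu.trans (min_le_right _ _)⟩
      hs.1.le
  have hup := hX.busemann_le_sub_mul_cos_add hγ hσ hσ0 hσγ hu (x := v s) (by rw [hpv]; exact hs.1)
  have hθs := hθ u ⟨hu, min_le_left _ _⟩ s ⟨hs.1, hsu.trans (min_le_left _ _)⟩
  have hangle : angleAt p σ v ≤ compAngle p (σ u) (v s) :=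
    hX.angleAt_le_compAngle (hσ.isUnitSpeedOn.mono Icc_subset_Ici_self) hσ0 hvu hv0 hu le_rfl hs.1
      (hsu.trans (min_le_right _ _))
  have hcos := (abs_le.1 (Real.abs_cos_sub_cos_le (angleAt p σ v) (compAngle p (σ u) (v s)))).2
  rw [abs_of_nonpos (by linarith)] at hcos
  rw [hpv, show s ^ 2 / u = s * (s / u) by ring] at hup
  have hslope : -Real.cos (compAngle p (σ u) (v s)) + s / u < a := by linarith
  rw [div_lt_iff₀ hs.1]
  linarith [mul_lt_mul_of_pos_left hslope hs.1]

end Slope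

theorem stmt11_general {X : Type*} [MetricSpace X] (hX : IsCAT0 X)
    (γ : ℝ → X) (hγ : IsRay γ) (p : X)
    (σ : ℝ → X) (hσ : IsRay σ) (hσ0 : σ 0 = p) (hσγ : Asymp σ γ)
    (v : ℝ → X) (ℓ : ℝ) (hv : UnitGeodFrom p v ℓ) :
    Filter.Tendsto (fun s => (busemann γ (v s) - busemann γ p) / s)
      (nhdsWithin 0 (Set.Ioi 0))
      (nhds (-(Real.cos (angleAt p σ v)))) := by
  refine tendsto_order.2
    ⟨fun a ha => ?_, fun a ha => hX.eventually_busemann_slope_lt hγ hσ hσ0 hσγ hv ha⟩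
  filter_upwards [Ioo_mem_nhdsGT hv.1] with s hs
  exact ha.trans_le (hX.neg_cos_angleAt_le_busemann_slope hγ hσ hσ0 hσγ hv hs.1 hs.2.le)

/-- Lemma 3.3(2): first variation formula for a Busemann function. -/
theorem stmt11 {X : Type*} [MetricSpace X] [CompleteSpace X] (hX : IsCAT0 X)
    (γ : ℝ → X) (hγ : IsRay γ) (p : X)
    (σ : ℝ → X) (hσ : IsRay σ) (hσ0 : σ 0 = p) (hσγ : Asymp σ γ)
    (v : ℝ → X) (ℓ : ℝ) (hv : UnitGeodFrom p v ℓ) :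
    Filter.Tendsto (fun s => (busemann γ (v s) - busemann γ p) / s)
      (nhdsWithin 0 (Set.Ioi 0))
      (nhds (-(Real.cos (angleAt p σ v)))) :=
  stmt11_general hX γ hγ p σ hσ hσ0 hσγ v ℓ hv
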